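/- If liminf_k |λ_k|/k = ∞, then for every s > 0 and every translation 𝐭, ℋ^s(R_𝐭((λ_k)_k)) = 0; hence dim_H R_𝐭((λ_k)_k) = 0 for all 𝐭. -/

import Mathlib

open Filter Matrix MeasureTheory
open scoped Topology ENNReal

/-- The `i`-th largest singular value of a `d × d` real matrix
(`singVal A 0 = α₁(A) ≥ ... ≥ singVal A (d-1) = α_d(A)`). -/
noncomputable def singVal {d : ℕ} (A : Matrix (Fin d) (Fin d) ℝ) (i : Fin d) : ℝ :=
  Real.sqrt ((show (Aᵀ * A).IsHermitian by simpa using Matrix.isHermitian_conjTranspose_mul_self A).eigenvalues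
    (Tuple.sort (show (Aᵀ * A).IsHermitian by simpa using Matrix.isHermitian_conjTranspose_mul_self A).eigenvalues i.rev))

/-- The singular value function `φ^s(A)`. -/
noncomputable def svf {d : ℕ} (A : Matrix (Fin d) (Fin d) ℝ) (s : ℝ) : ℝ :=
  if h : ⌊s⌋₊ < d then
    (∏ i ∈ Finset.univ.filter fun i : Fin d => (i : ℕ) < ⌊s⌋₊, singVal A i) *
      singVal A ⟨⌊s⌋₊, h⟩ ^ (s - (⌊s⌋₊ : ℝ))
  else (∏ i, singVal A i) ^ (s / d)

/-- The matrix product `A_𝐢 = A_{i₁} ⋯ A_{i_n}` along a finite word `𝐢`. -/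
noncomputable def wordProd {N d : ℕ} (A : Fin N → Matrix (Fin d) (Fin d) ℝ)
    (w : List (Fin N)) : Matrix (Fin d) (Fin d) ℝ := (w.map A).prod

/-- The inverse lower pressure `α(t) = liminf_k (−1/k) log φ^t(A_{λ_k})`, as an
extended real number. -/
noncomputable def invLowPressure {N d : ℕ} (A : Fin N → Matrix (Fin d) (Fin d) ℝ)
    (lam : ℕ → List (Fin N)) (t : ℝ) : EReal :=
  Filter.atTop.liminf fun k : ℕ =>
    ((-1 / (k : ℝ) * Real.log (svf (wordProd A (lam k)) t) : ℝ) : EReal)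

/-- `liminf_n |λ_n|/n`, as an extended real number. -/
noncomputable def lenLiminf {N : ℕ} (lam : ℕ → List (Fin N)) : EReal :=
  Filter.atTop.liminf fun n : ℕ => ((((lam n).length : ℝ) / n : ℝ) : EReal)

/-- The pressure `P(t) = lim_n (1/n) log Σ_{𝐢 ∈ Σ_n} φ^t(A_𝐢)`
(defined via `liminf`; under the standing assumptions the limit exists). -/
noncomputable def pressureFn {N d : ℕ} (A : Fin N → Matrix (Fin d) (Fin d) ℝ) (t : ℝ) : ℝ :=
  Filter.atTop.liminf fun n : ℕ =>
    (1 / (n : ℝ)) * Real.log (∑ w : Fin n → Fin N, svf (wordProd A (List.ofFn w)) t)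

/-- The square-pressure `P₂(t) = lim_n (−1/n) log Σ_{𝐢 ∈ Σ_n} (φ^t(A_𝐢))²`
(defined via `liminf`; under the standing assumptions the limit exists). -/
noncomputable def sqPressureFn {N d : ℕ} (A : Fin N → Matrix (Fin d) (Fin d) ℝ) (t : ℝ) : ℝ :=
  Filter.atTop.liminf fun n : ℕ =>
    (-1 / (n : ℝ)) * Real.log (∑ w : Fin n → Fin N, (svf (wordProd A (List.ofFn w)) t) ^ 2)

/-- The natural projection `π_𝐭(𝐢) = Σ_k A_{i₁}⋯A_{i_{k-1}} t_{i_k}` of the affine IFS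
`{x ↦ A_i x + t_i}` on `ℝ^d`. -/
noncomputable def projMap {N d : ℕ} (A : Fin N → Matrix (Fin d) (Fin d) ℝ)
    (tv : Fin N → EuclideanSpace ℝ (Fin d)) (x : ℕ → Fin N) : EuclideanSpace ℝ (Fin d) :=
  ∑' k : ℕ, (WithLp.toLp 2 ((wordProd A (List.ofFn fun j : Fin k => x j)).mulVec (tv (x k))) :
    EuclideanSpace ℝ (Fin d))

/-- The set of times `k` at which `σ^k 𝐢 ∈ [λ_k]`. -/
def targetTimes {N : ℕ} (lam : ℕ → List (Fin N)) (x : ℕ → Fin N) : Set ℕ :=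
  {k | List.ofFn (fun j : Fin (lam k).length => x (k + j)) = lam k}

/-- The shrinking target set
`R_𝐭((λ_k)_k) = π_𝐭 {𝐢 : σ^k 𝐢 ∈ [λ_k] for infinitely many k}`. -/
noncomputable def shrinkTarget {N d : ℕ} (A : Fin N → Matrix (Fin d) (Fin d) ℝ)
    (tv : Fin N → EuclideanSpace ℝ (Fin d)) (lam : ℕ → List (Fin N)) :
    Set (EuclideanSpace ℝ (Fin d)) :=
  projMap A tv '' {x | (targetTimes lam x).Infinite}

/-! Sequences agreeing on their first `m` symbols project to points `O(ρ ^ m)` apart, where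
`ρ < 1` bounds the top singular values of the `A i`. A point of the shrinking target lies, for
infinitely many `k`, in the image of a cylinder of length `k + |λ_k|`; there are `N ^ k` of these at
level `k`, each of diameter `O(ρ ^ (k + |λ_k|))`. Since `|λ_k| ≥ M k` eventually for every `M`, the
series `∑ₖ N ^ k ρ ^ (s |λ_k|)` converges for every `s > 0`, and the Hausdorff–Cantelli argument
gives `ℋ^s = 0`. -/

open scoped RealInnerProductSpace

lemma dist_tsum_tsum_le_of_eq_of_lt {E : Type*} [NormedAddCommGroup E] [CompleteSpace E]
    {f g : ℕ → E} {c ρ : ℝ} (hρ0 : 0 ≤ ρ) (hρ1 : ρ < 1) (hf : ∀ k, ‖f k‖ ≤ c * ρ ^ k)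
    (hg : ∀ k, ‖g k‖ ≤ c * ρ ^ k) {m : ℕ} (hfg : ∀ k < m, f k = g k) :
    dist (∑' k, f k) (∑' k, g k) ≤ 2 * c / (1 - ρ) * ρ ^ m := by
  have hgeom := summable_geometric_of_lt_one hρ0 hρ1
  have hfs : Summable f := .of_norm_bounded (hgeom.mul_left c) hf
  have hgs : Summable g := .of_norm_bounded (hgeom.mul_left c) hg
  have htail : ∀ k, ‖f (k + m) - g (k + m)‖ ≤ 2 * c * ρ ^ m * ρ ^ k := fun k =>
    calc ‖f (k + m) - g (k + m)‖ ≤ c * ρ ^ (k + m) + c * ρ ^ (k + m) :=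
          (norm_sub_le _ _).trans (add_le_add (hf _) (hg _))
      _ = 2 * c * ρ ^ m * ρ ^ k := by ring
  have hhead : ∑ k ∈ Finset.range m, (f k - g k) = 0 :=
    Finset.sum_eq_zero fun k hk => sub_eq_zero.2 (hfg k (Finset.mem_range.1 hk))
  rw [dist_eq_norm, ← hfs.tsum_sub hgs, ← (hfs.sub hgs).sum_add_tsum_nat_add m, hhead, zero_add,
    div_mul_eq_mul_div, div_eq_mul_inv]
  exact tsum_of_norm_bounded ((hasSum_geometric_of_lt_one hρ0 hρ1).mul_left _) htail

lemma summable_pow_mul_pow_of_tendsto_div_atTop {c q : ℝ} (hc : 0 ≤ c) (hq0 : 0 ≤ q)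
    (hq1 : q < 1) {L : ℕ → ℕ} (hL : Tendsto (fun k => (L k : ℝ) / k) atTop atTop) :
    Summable fun k => c ^ k * q ^ L k := by
  have hsmall : ∀ᶠ M in atTop, c * q ^ M < 1 / 2 := by
    have := (tendsto_pow_atTop_nhds_zero_of_lt_one hq0 hq1).const_mul c
    rw [mul_zero] at this
    exact this.eventually (gt_mem_nhds one_half_pos)
  obtain ⟨M, hM⟩ := hsmall.exists
  have hLM : ∀ᶠ k in atTop, M * k ≤ L k := by
    filter_upwards [hL.eventually_ge_atTop (M : ℝ), eventually_gt_atTop 0] with k hk hk0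
    exact_mod_cast (le_div_iff₀ (Nat.cast_pos.2 hk0)).1 hk
  refine summable_geometric_two.of_norm_bounded_eventually_nat ?_
  filter_upwards [hLM] with k hk
  rw [Real.norm_of_nonneg (by positivity)]
  calc c ^ k * q ^ L k ≤ c ^ k * q ^ (M * k) :=
        mul_le_mul_of_nonneg_left (pow_le_pow_of_le_one hq0 hq1.le hk) (by positivity)
    _ = (c * q ^ M) ^ k := by rw [mul_pow, pow_mul]
    _ ≤ (1 / 2) ^ k := pow_le_pow_left₀ (by positivity) hM.le k

lemma hausdorffMeasure_eq_zero_of_subset_iUnion_ge {X : Type*} [EMetricSpace X]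
    [MeasurableSpace X] [BorelSpace X] {ι : ℕ → Type*} [∀ k, Countable (ι k)]
    (U : ∀ k, ι k → Set X) {E : Set X} (hE : ∀ b, E ⊆ ⋃ k ≥ b, ⋃ i, U k i)
    {r : ℕ → ℝ≥0∞} (hr_anti : Antitone r) (hr : Tendsto r atTop (𝓝 0))
    (hU : ∀ k i, Metric.ediam (U k i) ≤ r k) {s : ℝ}
    (hsum : ∑' k, ∑' i, Metric.ediam (U k i) ^ s ≠ ∞) : μH[s] E = 0 := by
  have hcover : ∀ b, E ⊆ ⋃ p : Σ j : ℕ, ι (j + b), U (p.1 + b) p.2 := by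
    intro b x hx
    obtain ⟨k, hbk, hxk⟩ := Set.mem_iUnion₂.1 (hE b hx)
    obtain ⟨i, hi⟩ := Set.mem_iUnion.1 hxk
    obtain ⟨j, rfl⟩ := Nat.exists_eq_add_of_le' hbk
    exact Set.mem_iUnion.2 ⟨⟨j, i⟩, hi⟩
  have hle := Measure.hausdorffMeasure_le_liminf_tsum s E r hr
    (fun b (p : Σ j : ℕ, ι (j + b)) => U (p.1 + b) p.2)
    (.of_forall fun b p => (hU _ _).trans (hr_anti (Nat.le_add_left b p.1))) (.of_forall hcover)
  simp_rw [ENNReal.tsum_sigma'] at hle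
  rwa [(ENNReal.tendsto_sum_nat_add _ hsum).liminf_eq, nonpos_iff_eq_zero] at hle

lemma dimH_eq_zero_of_hausdorffMeasure_eq_zero {X : Type*} [EMetricSpace X]
    [MeasurableSpace X] [BorelSpace X] {E : Set X} (hE : ∀ s : ℝ, 0 < s → μH[s] E = 0) :
    dimH E = 0 := by
  refine nonpos_iff_eq_zero.1 (dimH_le fun s hs => ?_)
  by_contra! hpos
  rw [hE s (by exact_mod_cast ENNReal.coe_pos.1 hpos)] at hs
  exact ENNReal.zero_ne_top hs

lemma Matrix.IsHermitian.inner_toEuclideanLin_self_le {n : Type*} [Fintype n] [DecidableEq n]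
    {B : Matrix n n ℝ} (hB : B.IsHermitian) {m : ℝ} (hm : ∀ i, hB.eigenvalues i ≤ m)
    (v : EuclideanSpace ℝ n) : ⟪v, B.toEuclideanLin v⟫ ≤ m * ‖v‖ ^ 2 := by
  set b := hB.eigenvectorBasis
  have hsymm := Matrix.isSymmetric_toEuclideanLin_iff.mpr hB
  have heig : ∀ i, B.toEuclideanLin (b i) = hB.eigenvalues i • b i := fun i =>
    congrArg (WithLp.toLp 2) (hB.mulVec_eigenvectorBasis i)
  calc ⟪v, B.toEuclideanLin v⟫
      = ∑ i, hB.eigenvalues i * ⟪v, b i⟫ ^ 2 := by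
        rw [← b.sum_inner_mul_inner]
        refine Finset.sum_congr rfl fun i _ => ?_
        rw [← hsymm, heig, real_inner_smul_left, real_inner_comm]
        ring
    _ ≤ ∑ i, m * ⟪v, b i⟫ ^ 2 :=
        Finset.sum_le_sum fun i _ => mul_le_mul_of_nonneg_right (hm i) (sq_nonneg _)
    _ = m * ‖v‖ ^ 2 := by rw [← Finset.mul_sum, b.sum_sq_inner_left]

lemma Matrix.norm_toLp_mulVec_sq {n : Type*} [Fintype n] [DecidableEq n] (A : Matrix n n ℝ)
    (v : EuclideanSpace ℝ n) :
    ‖WithLp.toLp 2 (A *ᵥ v)‖ ^ 2 = ⟪v, (Aᵀ * A).toEuclideanLin v⟫ := by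
  rw [← real_inner_self_eq_norm_sq, Matrix.toLpLin_apply, ← Matrix.mulVec_mulVec]
  simp only [PiLp.inner_apply, RCLike.inner_apply, conj_trivial]
  change (A *ᵥ v) ⬝ᵥ (A *ᵥ v) = (Aᵀ *ᵥ (A *ᵥ v)) ⬝ᵥ WithLp.ofLp v
  rw [Matrix.mulVec_transpose, ← Matrix.dotProduct_mulVec, dotProduct_comm]

lemma eigenvalues_le_sq_singVal_zero {d : ℕ} (hd : 0 < d) (A : Matrix (Fin d) (Fin d) ℝ)
    (h : (Aᵀ * A).IsHermitian) (i : Fin d) : h.eigenvalues i ≤ singVal A ⟨0, hd⟩ ^ 2 := by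
  -- `singVal A 0` is the square root of the last eigenvalue in increasing order
  have hsort :
      h.eigenvalues i ≤ h.eigenvalues (Tuple.sort h.eigenvalues (⟨0, hd⟩ : Fin d).rev) := by
    have hle : (Tuple.sort h.eigenvalues).symm i ≤ (⟨0, hd⟩ : Fin d).rev := by
      rw [Fin.le_def]; simp only [Fin.rev]; omega
    simpa using Tuple.monotone_sort h.eigenvalues hle
  exact hsort.trans_eq (Real.sq_sqrt (Matrix.eigenvalues_conjTranspose_mul_self_nonneg A _)).symm

lemma norm_mulVec_le_singVal_zero_mul {d : ℕ} (hd : 0 < d) (A : Matrix (Fin d) (Fin d) ℝ)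
    (v : EuclideanSpace ℝ (Fin d)) :
    ‖WithLp.toLp 2 (A *ᵥ v)‖ ≤ singVal A ⟨0, hd⟩ * ‖v‖ := by
  have h : (Aᵀ * A).IsHermitian := by simpa using Matrix.isHermitian_conjTranspose_mul_self A
  refine (pow_le_pow_iff_left₀ (norm_nonneg _)
    (mul_nonneg (Real.sqrt_nonneg _) (norm_nonneg _)) two_ne_zero).1 ?_
  rw [Matrix.norm_toLp_mulVec_sq, mul_pow]
  exact h.inner_toEuclideanLin_self_le (eigenvalues_le_sq_singVal_zero hd A h) v

lemma norm_wordProd_mulVec_le {N d : ℕ} (hd : 0 < d) (A : Fin N → Matrix (Fin d) (Fin d) ℝ)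
    {ρ : ℝ} (hρ : ∀ i, singVal (A i) ⟨0, hd⟩ ≤ ρ) (w : List (Fin N))
    (v : EuclideanSpace ℝ (Fin d)) :
    ‖WithLp.toLp 2 (wordProd A w *ᵥ v)‖ ≤ ρ ^ w.length * ‖v‖ := by
  induction w generalizing v with
  | nil => simp [wordProd]
  | cons i w ih =>
    have hρ0 : 0 ≤ ρ := (Real.sqrt_nonneg _).trans (hρ i)
    calc ‖WithLp.toLp 2 (wordProd A (i :: w) *ᵥ v)‖
        = ‖WithLp.toLp 2 (A i *ᵥ WithLp.toLp 2 (wordProd A w *ᵥ v))‖ := by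
          simp [wordProd, Matrix.mulVec_mulVec]
      _ ≤ singVal (A i) ⟨0, hd⟩ * (ρ ^ w.length * ‖v‖) :=
          (norm_mulVec_le_singVal_zero_mul hd _ _).trans
            (mul_le_mul_of_nonneg_left (ih v) (Real.sqrt_nonneg _))
      _ ≤ ρ ^ (i :: w).length * ‖v‖ := by
          rw [List.length_cons, pow_succ', mul_assoc]
          exact mul_le_mul_of_nonneg_right (hρ i) (by positivity)

lemma dist_projMap_le {N d : ℕ} (hd : 0 < d) (A : Fin N → Matrix (Fin d) (Fin d) ℝ)
    (tv : Fin N → EuclideanSpace ℝ (Fin d)) {ρ T : ℝ} (hρ1 : ρ < 1)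
    (hρ : ∀ i, singVal (A i) ⟨0, hd⟩ ≤ ρ) (hT : ∀ i, ‖tv i‖ ≤ T) {m : ℕ} {x y : ℕ → Fin N}
    (hxy : ∀ j < m, x j = y j) :
    dist (projMap A tv x) (projMap A tv y) ≤ 2 * T / (1 - ρ) * ρ ^ m := by
  have hρ0 : 0 ≤ ρ := (Real.sqrt_nonneg _).trans (hρ (x 0))
  have hterm : ∀ (z : ℕ → Fin N) k,
      ‖WithLp.toLp 2 (wordProd A (List.ofFn fun j : Fin k => z j) *ᵥ tv (z k))‖ ≤ T * ρ ^ k :=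
    fun z k => (norm_wordProd_mulVec_le hd A hρ _ _).trans <| by
      rw [List.length_ofFn, mul_comm]; exact mul_le_mul_of_nonneg_right (hT _) (pow_nonneg hρ0 k)
  refine dist_tsum_tsum_le_of_eq_of_lt hρ0 hρ1 (hterm x) (hterm y) fun k hk => ?_
  have hpre : (fun j : Fin k => x j) = fun j : Fin k => y j := funext fun j => hxy j (j.2.trans hk)
  rw [hpre, hxy k hk]

def targetCylinder {N : ℕ} (lam : ℕ → List (Fin N)) (k : ℕ) (w : Fin k → Fin N) :
    Set (ℕ → Fin N) :=
  {x | (∀ j : Fin k, x j = w j) ∧ k ∈ targetTimes lam x}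

lemma eq_of_mem_targetCylinder {N : ℕ} {lam : ℕ → List (Fin N)} {k : ℕ} {w : Fin k → Fin N}
    {x y : ℕ → Fin N} (hx : x ∈ targetCylinder lam k w) (hy : y ∈ targetCylinder lam k w) :
    ∀ j < k + (lam k).length, x j = y j := by
  intro j hj
  rcases lt_or_ge j k with hjk | hjk
  · exact (hx.1 ⟨j, hjk⟩).trans (hy.1 ⟨j, hjk⟩).symm
  · have htarget := congrFun (List.ofFn_injective (hx.2.trans hy.2.symm)) ⟨j - k, by omega⟩
    simpa [Nat.add_sub_cancel' hjk] using htarget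

lemma shrinkTarget_subset_iUnion_ge {N d : ℕ} (A : Fin N → Matrix (Fin d) (Fin d) ℝ)
    (tv : Fin N → EuclideanSpace ℝ (Fin d)) (lam : ℕ → List (Fin N)) (b : ℕ) :
    shrinkTarget A tv lam ⊆ ⋃ k ≥ b, ⋃ w, projMap A tv '' targetCylinder lam k w := by
  rintro _ ⟨x, hx, rfl⟩
  obtain ⟨k, hk, hbk⟩ := Set.Infinite.exists_gt hx b
  exact Set.mem_biUnion hbk.le (Set.mem_iUnion.2 ⟨fun j => x j, x, ⟨fun _ => rfl, hk⟩, rfl⟩)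

lemma ediam_projMap_image_targetCylinder_le {N d : ℕ} (hd : 0 < d)
    (A : Fin N → Matrix (Fin d) (Fin d) ℝ) (tv : Fin N → EuclideanSpace ℝ (Fin d)) {ρ T : ℝ}
    (hρ1 : ρ < 1) (hρ : ∀ i, singVal (A i) ⟨0, hd⟩ ≤ ρ) (hT : ∀ i, ‖tv i‖ ≤ T)
    (lam : ℕ → List (Fin N)) (k : ℕ) (w : Fin k → Fin N) :
    Metric.ediam (projMap A tv '' targetCylinder lam k w) ≤
      ENNReal.ofReal (2 * T / (1 - ρ) * ρ ^ (k + (lam k).length)) :=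
  Metric.ediam_image_le_iff.2 fun _ hx _ hy => by
    rw [edist_dist]
    exact ENNReal.ofReal_le_ofReal
      (dist_projMap_le hd A tv hρ1 hρ hT (eq_of_mem_targetCylinder hx hy))

lemma hausdorffMeasure_shrinkTarget_eq_zero {N d : ℕ} (hd : 0 < d)
    (A : Fin N → Matrix (Fin d) (Fin d) ℝ) (tv : Fin N → EuclideanSpace ℝ (Fin d)) {ρ : ℝ}
    (hρ0 : 0 ≤ ρ) (hρ1 : ρ < 1) (hρ : ∀ i, singVal (A i) ⟨0, hd⟩ ≤ ρ)
    {lam : ℕ → List (Fin N)} (hlam : Tendsto (fun n : ℕ => ((lam n).length : ℝ) / n) atTop atTop)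
    {s : ℝ} (hs : 0 < s) : μH[s] (shrinkTarget A tv lam) = 0 := by
  set T := ∑ i, ‖tv i‖
  have hT : ∀ i, ‖tv i‖ ≤ T := fun i =>
    Finset.single_le_sum (fun j _ => norm_nonneg (tv j)) (Finset.mem_univ i)
  set C := 2 * T / (1 - ρ)
  have hC : 0 ≤ C := div_nonneg (by positivity) (sub_nonneg.2 hρ1.le)
  have hdiam := ediam_projMap_image_targetCylinder_le hd A tv hρ1 hρ hT lam
  have hterm : ∀ k (w : Fin k → Fin N),
      Metric.ediam (projMap A tv '' targetCylinder lam k w) ^ s ≤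
        ENNReal.ofReal (C ^ s * (ρ ^ s) ^ (lam k).length) := fun k w => by
    refine (ENNReal.rpow_le_rpow (hdiam k w) hs.le).trans ?_
    rw [ENNReal.ofReal_rpow_of_nonneg (by positivity) hs.le, Real.mul_rpow hC (by positivity),
      Real.rpow_pow_comm hρ0]
    refine ENNReal.ofReal_le_ofReal (mul_le_mul_of_nonneg_left ?_ (by positivity))
    exact Real.rpow_le_rpow (by positivity)
      (pow_le_pow_of_le_one hρ0 hρ1.le (Nat.le_add_left _ _)) hs.le
  have hsum : Summable fun k => (N : ℝ) ^ k * (C ^ s * (ρ ^ s) ^ (lam k).length) := by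
    simp_rw [mul_left_comm _ (C ^ s)]
    exact (summable_pow_mul_pow_of_tendsto_div_atTop (Nat.cast_nonneg N) (by positivity)
      (Real.rpow_lt_one hρ0 hρ1 hs) hlam).mul_left _
  have hpow_le : ∀ {k l : ℕ}, k ≤ l → C * ρ ^ l ≤ C * ρ ^ k := fun hkl =>
    mul_le_mul_of_nonneg_left (pow_le_pow_of_le_one hρ0 hρ1.le hkl) hC
  refine hausdorffMeasure_eq_zero_of_subset_iUnion_ge _ (shrinkTarget_subset_iUnion_ge A tv lam)
    (r := fun k => ENNReal.ofReal (C * ρ ^ k))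
    (fun k l hkl => ENNReal.ofReal_le_ofReal (hpow_le hkl)) ?_
    (fun k w => (hdiam k w).trans (ENNReal.ofReal_le_ofReal (hpow_le (Nat.le_add_right _ _)))) ?_
  · simpa using
      ENNReal.tendsto_ofReal ((tendsto_pow_atTop_nhds_zero_of_lt_one hρ0 hρ1).const_mul C)
  · refine ne_top_of_le_ne_top
      (ENNReal.ofReal_ne_top (r := ∑' k, (N : ℝ) ^ k * (C ^ s * (ρ ^ s) ^ (lam k).length))) ?_
    rw [ENNReal.ofReal_tsum_of_nonneg (fun k => by positivity) hsum]
    refine ENNReal.tsum_le_tsum fun k => (ENNReal.tsum_le_tsum (hterm k)).trans_eq ?_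
    rw [tsum_fintype, Finset.sum_const, Finset.card_univ, Fintype.card_fun, Fintype.card_fin,
      Fintype.card_fin, nsmul_eq_mul, ← Nat.cast_pow, ENNReal.ofReal_mul (Nat.cast_nonneg _),
      ENNReal.ofReal_natCast]

theorem stmt_15_general {N d : ℕ} (hd : 0 < d)
    (A : Fin N → Matrix (Fin d) (Fin d) ℝ)
    (hc : ∀ i, singVal (A i) ⟨0, hd⟩ < 1 / 2)
    (lam : ℕ → List (Fin N))
    (hlam : Tendsto (fun n : ℕ => ((lam n).length : ℝ) / n) atTop atTop) :
    ∀ tv : Fin N → EuclideanSpace ℝ (Fin d),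
      (∀ s : ℝ, 0 < s → μH[s] (shrinkTarget A tv lam) = 0) ∧
        dimH (shrinkTarget A tv lam) = 0 := by
  intro tv
  have hμH : ∀ s : ℝ, 0 < s → μH[s] (shrinkTarget A tv lam) = 0 := fun _ hs =>
    hausdorffMeasure_shrinkTarget_eq_zero hd A tv (by norm_num) (by norm_num) (fun i => (hc i).le)
      hlam hs
  exact ⟨hμH, dimH_eq_zero_of_hausdorffMeasure_eq_zero hμH⟩

/-- if `|λ_k|/k → ∞`, then `ℋ^s(R_𝐭((λ_k)_k)) = 0` for every `s > 0` and
every translation `𝐭`; hence `dim_H R_𝐭((λ_k)_k) = 0` for all `𝐭`. -/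
theorem stmt_15 {N d : ℕ} (hN : 2 ≤ N) (hd : 0 < d)
    (A : Fin N → Matrix (Fin d) (Fin d) ℝ)
    (hA : ∀ i, IsUnit (A i).det) (hc : ∀ i, singVal (A i) ⟨0, hd⟩ < 1 / 2)
    (lam : ℕ → List (Fin N))
    (hlam : Tendsto (fun n : ℕ => ((lam n).length : ℝ) / n) atTop atTop) :
    ∀ tv : Fin N → EuclideanSpace ℝ (Fin d),
      (∀ s : ℝ, 0 < s → μH[s] (shrinkTarget A tv lam) = 0) ∧
        dimH (shrinkTarget A tv lam) = 0 :=
  stmt_15_general hd A hc lam hlam
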